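/- Let $f : \mathbb{R}^n \to \mathbb{R}$ be differentiable, $Q \in \mathbb{R}^{n\times n}$ symmetric positive definite, and suppose that for some $\xi \in (0,1]$ and a point $x$ it holds that $f(x + \Delta) \le \xi\big(f(x) + \nabla f(x)^\top \Delta + \tfrac12 \Delta^\top Q \Delta\big) + (1-\xi)f(x)$ for all $\Delta$. Let $\mathcal{P}$ be a partition of $[n]$ into $K$ blocks with $Q_\mathcal{P}$ invertible, and set $x_+ = x - \tfrac1K Q_\mathcal{P}^{-1}\nabla f(x)$. Then $f(x) - f(x_+) \geq \tfrac{\xi}{2K}\, \nabla f(x)^\top Q_\mathcal{P}^{-1} \nabla f(x)$. -/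

import Mathlib

/-!
Take the step `Δ = -(1/K) Q_𝒫⁻¹ ∇f(x)` in the relaxed upper bound. Splitting a vector into its
`K` blocks and bounding cross terms by `2 uᵀQw ≤ uᵀQu + wᵀQw` gives `Q ≼ K Q_𝒫`, so the model's
quadratic term `½ ΔᵀQΔ` costs at most half of the gain `(1/K) ∇f(x)ᵀ Q_𝒫⁻¹ ∇f(x)` of its
linear term.
-/

open Matrix

/-- Block-diagonal restriction of a matrix induced by a block assignment `π`. -/
def maskMat {n K : ℕ} (M : Matrix (Fin n) (Fin n) ℝ) (π : Fin n → Fin K) :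
    Matrix (Fin n) (Fin n) ℝ :=
  Matrix.of fun i j => if π i = π j then M i j else 0

namespace Matrix.PosSemidef

variable {ι : Type*} [Fintype ι] {Q : Matrix ι ι ℝ}

theorem two_mul_dotProduct_mulVec_le (hQ : Q.PosSemidef) (u w : ι → ℝ) :
    2 * (u ⬝ᵥ (Q *ᵥ w)) ≤ u ⬝ᵥ (Q *ᵥ u) + w ⬝ᵥ (Q *ᵥ w) := by
  have hsymm : w ⬝ᵥ (Q *ᵥ u) = u ⬝ᵥ (Q *ᵥ w) := by
    rw [dotProduct_mulVec, ← mulVec_transpose, ← conjTranspose_eq_transpose_of_trivial,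
      hQ.isHermitian.eq, dotProduct_comm]
  have hnonneg : 0 ≤ (u - w) ⬝ᵥ (Q *ᵥ (u - w)) := by
    simpa using hQ.dotProduct_mulVec_nonneg (u - w)
  rw [mulVec_sub, sub_dotProduct, dotProduct_sub, dotProduct_sub, hsymm] at hnonneg
  linarith

theorem dotProduct_mulVec_sum_le {κ : Type*} (hQ : Q.PosSemidef) (s : Finset κ)
    (p : κ → ι → ℝ) :
    (∑ k ∈ s, p k) ⬝ᵥ (Q *ᵥ ∑ k ∈ s, p k) ≤ s.card * ∑ k ∈ s, p k ⬝ᵥ (Q *ᵥ p k) := by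
  set q : κ → ℝ := fun k => p k ⬝ᵥ (Q *ᵥ p k)
  calc (∑ k ∈ s, p k) ⬝ᵥ (Q *ᵥ ∑ k ∈ s, p k)
      = ∑ k ∈ s, ∑ l ∈ s, p k ⬝ᵥ (Q *ᵥ p l) := by
        simp only [mulVec_sum, dotProduct_sum, sum_dotProduct]
        exact Finset.sum_comm
    _ ≤ ∑ k ∈ s, ∑ l ∈ s, (q k + q l) / 2 := by
        gcongr with k _ l _
        linarith [hQ.two_mul_dotProduct_mulVec_le (p k) (p l)]
    _ = s.card * ∑ k ∈ s, q k := by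
        simp only [add_div, Finset.sum_add_distrib, Finset.sum_const, nsmul_eq_mul,
          ← Finset.sum_div, ← Finset.mul_sum]
        ring

end Matrix.PosSemidef

/-- The paper's `v_{[𝒫ₖ]}`, padded with zeros outside the block `π⁻¹ {k}`. -/
def blockRestrict {ι κ : Type*} [DecidableEq κ] (π : ι → κ) (k : κ) (v : ι → ℝ) : ι → ℝ :=
  fun i => if π i = k then v i else 0

theorem sum_blockRestrict {ι κ : Type*} [Fintype κ] [DecidableEq κ] (π : ι → κ)
    (v : ι → ℝ) : ∑ k, blockRestrict π k v = v := by
  funext i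
  simp [blockRestrict, Finset.sum_apply]

theorem dotProduct_maskMat_mulVec {n K : ℕ} (Q : Matrix (Fin n) (Fin n) ℝ)
    (π : Fin n → Fin K) (v : Fin n → ℝ) :
    v ⬝ᵥ (maskMat Q π *ᵥ v) =
      ∑ k, blockRestrict π k v ⬝ᵥ (Q *ᵥ blockRestrict π k v) := by
  simp only [dotProduct, mulVec, maskMat, blockRestrict, of_apply, Finset.mul_sum]
  symm
  rw [Finset.sum_comm]
  refine Finset.sum_congr rfl fun i _ => ?_
  rw [Finset.sum_comm]
  refine Finset.sum_congr rfl fun j _ => ?_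
  simp only [ite_mul, mul_ite, zero_mul, mul_zero, Finset.sum_ite_eq, Finset.mem_univ,
    if_true]

/-- `Q ≼ K Q_𝒫` in quadratic-form terms. -/
theorem dotProduct_mulVec_le_mul_maskMat {n K : ℕ} {Q : Matrix (Fin n) (Fin n) ℝ}
    (hQ : Q.PosSemidef) (π : Fin n → Fin K) (v : Fin n → ℝ) :
    v ⬝ᵥ (Q *ᵥ v) ≤ K * (v ⬝ᵥ (maskMat Q π *ᵥ v)) := by
  have h := hQ.dotProduct_mulVec_sum_le Finset.univ fun k => blockRestrict π k v
  rwa [sum_blockRestrict, Finset.card_univ, Fintype.card_fin,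
    ← dotProduct_maskMat_mulVec] at h

theorem stmt6_general {n K : ℕ}
    (f : (Fin n → ℝ) → ℝ) (g : (Fin n → ℝ) → (Fin n → ℝ))
    (Q : Matrix (Fin n) (Fin n) ℝ) (hQ : Q.PosDef)
    (ξ : ℝ) (hξ0 : 0 < ξ)
    (x : Fin n → ℝ)
    (hmodel : ∀ Δ : Fin n → ℝ,
      f (x + Δ) ≤ ξ * (f x + g x ⬝ᵥ Δ + 1 / 2 * (Δ ⬝ᵥ (Q *ᵥ Δ))) + (1 - ξ) * f x)
    (π : Fin n → Fin K) (hQP : IsUnit (maskMat Q π).det)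
    (xplus : Fin n → ℝ)
    (hxplus : xplus = x - ((K : ℝ)⁻¹) • ((maskMat Q π)⁻¹ *ᵥ g x)) :
    f x - f xplus ≥ ξ / (2 * (K : ℝ)) * (g x ⬝ᵥ ((maskMat Q π)⁻¹ *ᵥ g x)) := by
  set w := (maskMat Q π)⁻¹ *ᵥ g x
  set s := g x ⬝ᵥ w
  have hw : maskMat Q π *ᵥ w = g x := by
    rw [mulVec_mulVec, mul_nonsing_inv _ hQP, one_mulVec]
  have hwQw : w ⬝ᵥ (Q *ᵥ w) ≤ K * s := by
    simpa [hw, dotProduct_comm w] using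
      dotProduct_mulVec_le_mul_maskMat hQ.posSemidef π w
  have hstep := hmodel (-((K : ℝ)⁻¹ • w))
  rw [← sub_eq_add_neg, ← hxplus] at hstep
  simp only [dotProduct_neg, mulVec_neg, neg_dotProduct, dotProduct_smul, mulVec_smul,
    smul_dotProduct, smul_eq_mul, mul_neg, neg_neg] at hstep
  have hKinv : (K : ℝ)⁻¹ * K * (K : ℝ)⁻¹ = (K : ℝ)⁻¹ := by
    simpa using mul_inv_mul_cancel (K : ℝ)⁻¹
  have hdecrease :
      ξ * ((K : ℝ)⁻¹ * ((K : ℝ)⁻¹ * (w ⬝ᵥ (Q *ᵥ w)))) ≤ ξ * ((K : ℝ)⁻¹ * s) :=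
    calc _ ≤ ξ * ((K : ℝ)⁻¹ * ((K : ℝ)⁻¹ * (K * s))) := by gcongr
      _ = ξ * ((K : ℝ)⁻¹ * s) := by linear_combination ξ * s * hKinv
  have hrate : ξ / (2 * (K : ℝ)) * s = ξ * ((K : ℝ)⁻¹ * s) / 2 := by ring
  rw [ge_iff_le, hrate]
  linarith

theorem stmt6 {n K : ℕ} (hK : 1 ≤ K)
    (f : (Fin n → ℝ) → ℝ) (g : (Fin n → ℝ) → (Fin n → ℝ))
    (hdiff : Differentiable ℝ f)
    (hgrad : ∀ x u, fderiv ℝ f x u = g x ⬝ᵥ u)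
    (Q : Matrix (Fin n) (Fin n) ℝ) (hQ : Q.PosDef)
    (ξ : ℝ) (hξ0 : 0 < ξ) (hξ1 : ξ ≤ 1)
    (x : Fin n → ℝ)
    (hmodel : ∀ Δ : Fin n → ℝ,
      f (x + Δ) ≤ ξ * (f x + g x ⬝ᵥ Δ + 1 / 2 * (Δ ⬝ᵥ (Q *ᵥ Δ))) + (1 - ξ) * f x)
    (π : Fin n → Fin K) (hQP : IsUnit (maskMat Q π).det)
    (xplus : Fin n → ℝ)
    (hxplus : xplus = x - ((K : ℝ)⁻¹) • ((maskMat Q π)⁻¹ *ᵥ g x)) :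
    f x - f xplus ≥ ξ / (2 * (K : ℝ)) * (g x ⬝ᵥ ((maskMat Q π)⁻¹ *ᵥ g x)) :=
  stmt6_general f g Q hQ ξ hξ0 x hmodel π hQP xplus hxplus
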